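/- (Theorem 3: accelerated convergence rate) Suppose the gradient of f is L-Lipschitz for some L > 0 and x* is a minimizer of F = f + h. Let β_1 = 0 and β_k = (1 + √(1 + 4β_{k-1}²))/2 for k ≥ 2, and let sequences (x_k)_{k≥1}, (y_k)_{k≥1} ⊂ ℝ^d and nonincreasing stepsizes (λ_k)_{k≥1} with λ_k ≥ 1/(3L) satisfy, for every k ≥ 1: the composite linesearch condition holds at x_k with stepsize λ_k, y_{k+1} = x_k − λ_k G_{λ_k}(x_k), and x_{k+1} = ((β_k + β_{k+1} − 1)/β_{k+1}) y_{k+1} + ((1 − β_k)/β_{k+1}) y_k, with x_1 = y_1. Then for every T ≥ 2: F(y_{T+1}) − F(x*) ≤ ‖y_1 − x*‖² / (2 λ_T β_T²) ≤ 6L‖y_1 − x*‖² / (T − 1)². -/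

import Mathlib

open RealInnerProductSpace

section Aux

variable {E : Type*} [NormedAddCommGroup E] [InnerProductSpace ℝ E] [CompleteSpace E]

lemma expand_sq (a b : E) (t : ℝ) :
    ‖a + t • b‖ ^ 2 = ‖a‖ ^ 2 + 2 * t * ⟪a, b⟫ + t ^ 2 * ‖b‖ ^ 2 := by
  rw [@norm_add_sq_real, real_inner_smul_right, norm_smul]
  simp [mul_pow, abs_mul_abs_self]
  ring

lemma comb_sq (a b : E) (t : ℝ) :
    ‖(1 - t) • a + t • b‖ ^ 2
      = (1 - t) * ‖a‖ ^ 2 + t * ‖b‖ ^ 2 - t * (1 - t) * ‖a - b‖ ^ 2 := by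
  rw [@norm_add_sq_real, @norm_sub_sq_real, real_inner_smul_left, real_inner_smul_right,
    norm_smul, norm_smul]
  simp [mul_pow, sq_abs]
  ring

lemma grad_ineq (f : E → ℝ) (hconv : ConvexOn ℝ Set.univ f) (hdiff : Differentiable ℝ f)
    (a b : E) : f a + ⟪gradient f a, b - a⟫ ≤ f b := by
  set g : ℝ → ℝ := fun t => f (a + t • (b - a)) with hg
  have hgc : ConvexOn ℝ Set.univ g := by
    have := hconv.comp_affineMap (AffineMap.lineMap a b : ℝ →ᵃ[ℝ] E)
    have heq : g = f ∘ (AffineMap.lineMap a b : ℝ →ᵃ[ℝ] E) := by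
      funext t
      simp [g, AffineMap.lineMap_apply, add_comm]
    rw [heq]
    simpa using this
  have hA : HasDerivAt (fun t : ℝ => a + t • (b - a)) (b - a) 0 := by
    simpa using ((hasDerivAt_id (0:ℝ)).smul_const (b - a)).const_add a
  have hF : HasFDerivAt f (InnerProductSpace.toDual ℝ E (gradient f a)) (a + (0:ℝ) • (b - a)) := by
    have := (hdiff (a + (0:ℝ) • (b-a))).hasGradientAt
    rw [hasGradientAt_iff_hasFDerivAt] at this
    simpa using this
  have hgd : HasDerivAt g (⟪gradient f a, b - a⟫) 0 := by
    have := hF.comp_hasDerivAt 0 hA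
    rw [InnerProductSpace.toDual_apply_apply] at this
    exact this
  have := hgc.le_slope_of_hasDerivAt (Set.mem_univ (0:ℝ)) (Set.mem_univ (1:ℝ)) one_pos hgd
  rw [slope_def_field] at this
  simp [g] at this
  have e : ⟪gradient f a, b - a⟫ = (fderiv ℝ f a) b - (fderiv ℝ f a) a := by simp
  linarith

lemma prox_strong (h : E → ℝ) (hh : ConvexOn ℝ Set.univ h) (lam : ℝ) (hlam : 0 < lam)
    (p v : E)
    (hp : ∀ u, h p + (1/(2*lam)) * ‖p - v‖ ^ 2 ≤ h u + (1/(2*lam)) * ‖u - v‖ ^ 2)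
    (z : E) :
    h p + (1/(2*lam)) * ‖p - v‖ ^ 2 + (1/(2*lam)) * ‖z - p‖ ^ 2
      ≤ h z + (1/(2*lam)) * ‖z - v‖ ^ 2 := by
  set c : ℝ := 1/(2*lam) with hc
  have hcpos : 0 < c := by positivity
  have key : ∀ t : ℝ, 0 < t → t < 1 →
      h p + c * ‖p - v‖ ^ 2 + c * (1 - t) * ‖z - p‖ ^ 2 ≤ h z + c * ‖z - v‖ ^ 2 := by
    intro t ht ht1
    have hu := hp ((1 - t) • p + t • z)
    have hconv : h ((1 - t) • p + t • z) ≤ (1 - t) * h p + t * h z :=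
      hh.2 (Set.mem_univ p) (Set.mem_univ z) (by linarith) ht.le (by ring)
    have hq : ‖((1 - t) • p + t • z) - v‖ ^ 2
        = (1 - t) * ‖p - v‖ ^ 2 + t * ‖z - v‖ ^ 2 - t * (1 - t) * ‖p - z‖ ^ 2 := by
      have : ((1 - t) • p + t • z) - v = (1 - t) • (p - v) + t • (z - v) := by
        module
      rw [this, comb_sq]
      congr 3
      abel
    rw [hq] at hu
    have hnpz : ‖p - z‖ ^ 2 = ‖z - p‖ ^ 2 := by rw [norm_sub_rev]
    rw [hnpz] at hu
    nlinarith [hu, hconv]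
  have htend : Filter.Tendsto (fun n : ℕ =>
      h p + c * ‖p - v‖ ^ 2 + c * (1 - 1/(n+2)) * ‖z - p‖ ^ 2) Filter.atTop
      (nhds (h p + c * ‖p - v‖ ^ 2 + c * (1 - 0) * ‖z - p‖ ^ 2)) := by
    refine Filter.Tendsto.add tendsto_const_nhds ?_
    refine Filter.Tendsto.mul_const _ (Filter.Tendsto.const_mul _ ?_)
    refine Filter.Tendsto.const_sub _ ?_
    have : Filter.Tendsto (fun n : ℕ => ((n:ℝ) + 2)) Filter.atTop Filter.atTop :=
      Filter.tendsto_atTop_add_const_right _ 2 tendsto_natCast_atTop_atTop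
    simpa [one_div, Pi.inv_def] using this.inv_tendsto_atTop
  have := le_of_tendsto htend (Filter.Eventually.of_forall (fun n => by
    have h1 : (0:ℝ) < 1/(n+2) := by positivity
    have h2 : (1:ℝ)/(n+2) < 1 := by
      rw [div_lt_one (by positivity)]
      have : (0:ℝ) ≤ n := Nat.cast_nonneg n
      linarith
    exact key _ h1 h2))
  simpa using this

lemma key_step (f h : E → ℝ) (hf_conv : ConvexOn ℝ Set.univ f) (hf_diff : Differentiable ℝ f)
    (hh_conv : ConvexOn ℝ Set.univ h)
    (lam : ℝ) (hlam : 0 < lam) (X P Gv : E)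
    (hp : ∀ u, h P + (1/(2*lam)) * ‖P - (X - lam • gradient f X)‖ ^ 2 ≤
          h u + (1/(2*lam)) * ‖u - (X - lam • gradient f X)‖ ^ 2)
    (hGd : Gv = lam⁻¹ • (X - P))
    (hls : f (X - (2*lam) • Gv) ≤ f (X - lam • Gv)
            - lam * ⟪Gv, gradient f X⟫ + (lam/2) * ‖Gv‖ ^ 2)
    (z : E) :
    f P + h P ≤ f z + h z + (1/(2*lam)) * (‖X - z‖ ^ 2 - ‖P - z‖ ^ 2) := by
  set g := gradient f X with hgdef
  have hPX : X - lam • Gv = P := by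
    rw [hGd, smul_smul, mul_inv_cancel₀ hlam.ne', one_smul, sub_sub_cancel]
  -- (a) sufficient decrease
  have hmid : X - lam • Gv = (1/2 : ℝ) • X + (1/2 : ℝ) • (X - (2*lam) • Gv) := by
    module
  have hmidle : f (X - lam • Gv) ≤ (1/2) * f X + (1/2) * f (X - (2*lam) • Gv) := by
    rw [hmid]
    exact hf_conv.2 (Set.mem_univ _) (Set.mem_univ _) (by norm_num) (by norm_num) (by norm_num)
  have suffdec : f P ≤ f X - lam * ⟪Gv, g⟫ + (lam/2) * ‖Gv‖ ^ 2 := by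
    rw [← hPX]
    linarith [hls, hmidle]
  -- (b) gradient inequality
  have hb : f X + ⟪g, z - X⟫ ≤ f z := grad_ineq f hf_conv hf_diff X z
  -- (c) prox strong convexity
  have hc := prox_strong h hh_conv lam hlam P (X - lam • g) hp z
  -- norm expansions
  have n1 : ‖z - (X - lam • g)‖ ^ 2
      = ‖z - X‖ ^ 2 + 2 * lam * ⟪z - X, g⟫ + lam ^ 2 * ‖g‖ ^ 2 := by
    rw [show z - (X - lam • g) = (z - X) + lam • g by module, expand_sq]
  have n2 : ‖P - (X - lam • g)‖ ^ 2 = lam ^ 2 * (‖g‖ ^ 2 - 2 * ⟪g, Gv⟫ + ‖Gv‖ ^ 2) := by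
    rw [show P - (X - lam • g) = lam • (g - Gv) by rw [← hPX]; module, norm_smul,
      mul_pow, @norm_sub_sq_real]
    simp [sq_abs]
  have n3 : ‖z - P‖ ^ 2 = ‖z - X‖ ^ 2 + 2 * lam * ⟪z - X, Gv⟫ + lam ^ 2 * ‖Gv‖ ^ 2 := by
    rw [show z - P = (z - X) + lam • Gv by rw [← hPX]; module, expand_sq]
  have n4 : ‖P - z‖ ^ 2 = ‖z - P‖ ^ 2 := by rw [norm_sub_rev]
  have n5 : ‖X - z‖ ^ 2 = ‖z - X‖ ^ 2 := by rw [norm_sub_rev]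
  rw [n1, n2, n3] at hc
  have hc2 : h P ≤ h z + ⟪z - X, g⟫ + lam * ⟪g, Gv⟫ - lam * ‖Gv‖ ^ 2 - ⟪z - X, Gv⟫ := by
    have e : (1/(2*lam)) * (2*lam*⟪z-X,g⟫ + 2*lam^2*⟪g,Gv⟫ - 2*lam^2*‖Gv‖^2
          - 2*lam*⟪z-X,Gv⟫)
        = ⟪z-X,g⟫ + lam*⟪g,Gv⟫ - lam*‖Gv‖^2 - ⟪z-X,Gv⟫ := by
      field_simp
    nlinarith [hc, e]
  have ngoal : (1/(2*lam)) * (‖X - z‖ ^ 2 - ‖P - z‖ ^ 2)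
      = -⟪z - X, Gv⟫ - (lam/2) * ‖Gv‖ ^ 2 := by
    rw [n5, n4, n3]
    field_simp
    ring
  rw [ngoal]
  rw [real_inner_comm g Gv] at suffdec
  rw [real_inner_comm (z - X) g] at hb
  linarith [suffdec, hb, hc2]


end Aux

set_option maxHeartbeats 1000000

/-- Theorem 3: accelerated convergence rate: Suppose the gradient of f is
L-Lipschitz for some L > 0 and x* is a minimizer of F = f + h. Let β_1 = 0 and
β_k = (1 + √(1 + 4β_{k-1}²))/2 for k ≥ 2, and let sequences (x_k), (y_k) and nonincreasing
stepsizes (λ_k) with λ_k ≥ 1/(3L) satisfy, for every k ≥ 1: the composite linesearch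
condition holds at x_k with stepsize λ_k, y_{k+1} = x_k − λ_k G_{λ_k}(x_k), and
x_{k+1} = ((β_k + β_{k+1} − 1)/β_{k+1}) y_{k+1} + ((1 − β_k)/β_{k+1}) y_k, with x_1 = y_1.
Then for every T ≥ 2:
F(y_{T+1}) − F(x*) ≤ ‖y_1 − x*‖²/(2λ_T β_T²) ≤ 6L‖y_1 − x*‖²/(T − 1)². -/
theorem stmt_19 {d : ℕ} (f h : EuclideanSpace ℝ (Fin d) → ℝ)
    (hf_conv : ConvexOn ℝ Set.univ f) (hf_diff : Differentiable ℝ f)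
    (L : ℝ) (hL : 0 < L)
    (hf_lip : ∀ a b, ‖gradient f a - gradient f b‖ ≤ L * ‖a - b‖)
    (hh_conv : ConvexOn ℝ Set.univ h)
    (xstar : EuclideanSpace ℝ (Fin d))
    (hmin : ∀ y, f xstar + h xstar ≤ f y + h y)
    (beta : ℕ → ℝ) (hb1 : beta 1 = 0)
    (hbrec : ∀ k : ℕ, 2 ≤ k → beta k = (1 + Real.sqrt (1 + 4 * beta (k - 1) ^ 2)) / 2)
    (x y p G : ℕ → EuclideanSpace ℝ (Fin d)) (lam : ℕ → ℝ)
    (hlam_pos : ∀ k : ℕ, 1 ≤ k → 0 < lam k)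
    (hlam_lb : ∀ k : ℕ, 1 ≤ k → 1 / (3 * L) ≤ lam k)
    (hlam_mono : ∀ k : ℕ, 1 ≤ k → lam (k + 1) ≤ lam k)
    (hp : ∀ k : ℕ, 1 ≤ k → ∀ u,
          h (p k) + (1 / (2 * lam k)) * ‖p k - (x k - lam k • gradient f (x k))‖ ^ 2 ≤
          h u + (1 / (2 * lam k)) * ‖u - (x k - lam k • gradient f (x k))‖ ^ 2)
    (hG : ∀ k : ℕ, 1 ≤ k → G k = (lam k)⁻¹ • (x k - p k))
    (hls : ∀ k : ℕ, 1 ≤ k →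
          f (x k - (2 * lam k) • G k) ≤ f (x k - lam k • G k)
            - lam k * ⟪G k, gradient f (x k)⟫ + (lam k / 2) * ‖G k‖ ^ 2)
    (hyupd : ∀ k : ℕ, 1 ≤ k → y (k + 1) = x k - lam k • G k)
    (hxupd : ∀ k : ℕ, 1 ≤ k →
          x (k + 1) = ((beta k + beta (k + 1) - 1) / beta (k + 1)) • y (k + 1)
            + ((1 - beta k) / beta (k + 1)) • y k)
    (hinit : x 1 = y 1) :
    ∀ T : ℕ, 2 ≤ T →
      (f (y (T + 1)) + h (y (T + 1))) - (f xstar + h xstar) ≤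
          ‖y 1 - xstar‖ ^ 2 / (2 * lam T * beta T ^ 2) ∧
      ‖y 1 - xstar‖ ^ 2 / (2 * lam T * beta T ^ 2) ≤
          6 * L * ‖y 1 - xstar‖ ^ 2 / ((T : ℝ) - 1) ^ 2 := by
  -- beta facts
  have hb2 : beta 2 = 1 := by
    have hr := hbrec 2 le_rfl
    norm_num [hb1, Real.sqrt_one] at hr
    exact hr
  have hbsq : ∀ k : ℕ, 1 ≤ k → beta (k+1) ^ 2 - beta (k+1) = beta k ^ 2 := by
    intro k hk
    have hr := hbrec (k+1) (by omega)
    simp only [Nat.add_sub_cancel] at hr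
    have hnn : (0:ℝ) ≤ 1 + 4 * beta k ^ 2 := by positivity
    have hs : Real.sqrt (1 + 4 * beta k ^ 2) ^ 2 = 1 + 4 * beta k ^ 2 := Real.sq_sqrt hnn
    rw [hr]; nlinarith [hs]
  have hbge : ∀ k : ℕ, 2 ≤ k → (k:ℝ)/2 ≤ beta k := by
    intro k hk
    induction k, hk using Nat.le_induction with
    | base => rw [hb2]; norm_num
    | succ n hn ih =>
      have hr := hbrec (n+1) (by omega)
      simp only [Nat.add_sub_cancel] at hr
      have hn2 : (2:ℝ) ≤ (n:ℝ) := by exact_mod_cast hn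
      have hbn0 : 0 ≤ beta n := by linarith [ih]
      have hs : 2 * beta n ≤ Real.sqrt (1 + 4 * beta n ^ 2) := by
        rw [show (2*beta n) = Real.sqrt ((2*beta n)^2) by rw [Real.sqrt_sq (by positivity)]]
        apply Real.sqrt_le_sqrt; nlinarith
      rw [hr]; push_cast; linarith [ih]
  have hbpos : ∀ k : ℕ, 2 ≤ k → 1 ≤ beta k := by
    intro k hk
    have h1 := hbge k hk
    have h2 : (2:ℝ) ≤ (k:ℝ) := by exact_mod_cast hk
    linarith
  -- y (k+1) = p k
  have hyp : ∀ k : ℕ, 1 ≤ k → y (k+1) = p k := by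
    intro k hk
    rw [hyupd k hk, hG k hk, smul_smul, mul_inv_cancel₀ (hlam_pos k hk).ne', one_smul,
      sub_sub_cancel]
  -- key per-step inequality
  have star : ∀ k : ℕ, 1 ≤ k → ∀ z,
      f (y (k+1)) + h (y (k+1)) ≤ f z + h z
        + (1/(2*lam k)) * (‖x k - z‖ ^ 2 - ‖y (k+1) - z‖ ^ 2) := by
    intro k hk z
    rw [hyp k hk]
    exact key_step f h hf_conv hf_diff hh_conv (lam k) (hlam_pos k hk) (x k) (p k) (G k)
      (hp k hk) (hG k hk) (hls k hk) z
  -- energy decrease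
  have step : ∀ k : ℕ, 1 ≤ k →
      lam (k+1) * beta (k+1) ^ 2 * ((f (y (k+2)) + h (y (k+2))) - (f xstar + h xstar))
        + (1/2) * ‖beta (k+1) • y (k+2) - (beta (k+1) - 1) • y (k+1) - xstar‖ ^ 2
      ≤ lam k * beta k ^ 2 * ((f (y (k+1)) + h (y (k+1))) - (f xstar + h xstar))
        + (1/2) * ‖beta k • y (k+1) - (beta k - 1) • y k - xstar‖ ^ 2 := by
    intro k hk
    have hbk1 : 1 ≤ beta (k+1) := hbpos (k+1) (by omega)
    have hbkpos : 0 < beta (k+1) := by linarith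
    have hbne : beta (k+1) ≠ 0 := ne_of_gt hbkpos
    have hinv0 : 0 ≤ (beta (k+1))⁻¹ := by positivity
    have hinv1 : (beta (k+1))⁻¹ ≤ 1 := by
      rw [inv_le_one_iff₀]; right; exact hbk1
    set z := (beta (k+1))⁻¹ • xstar + (1 - (beta (k+1))⁻¹) • y (k+1) with hzdef
    have hstar : f (y (k+2)) + h (y (k+2)) ≤ f z + h z
        + (1/(2*lam (k+1))) * (‖x (k+1) - z‖ ^ 2 - ‖y (k+2) - z‖ ^ 2) :=
      star (k+1) (by omega) z
    have hFz : f z + h z ≤ (beta (k+1))⁻¹ * (f xstar + h xstar)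
        + (1 - (beta (k+1))⁻¹) * (f (y (k+1)) + h (y (k+1))) := by
      have hcf : f ((beta (k+1))⁻¹ • xstar + (1 - (beta (k+1))⁻¹) • y (k+1))
          ≤ (beta (k+1))⁻¹ * f xstar + (1 - (beta (k+1))⁻¹) * f (y (k+1)) :=
        hf_conv.2 (Set.mem_univ _) (Set.mem_univ _) hinv0 (by linarith) (by ring)
      have hch : h ((beta (k+1))⁻¹ • xstar + (1 - (beta (k+1))⁻¹) • y (k+1))
          ≤ (beta (k+1))⁻¹ * h xstar + (1 - (beta (k+1))⁻¹) * h (y (k+1)) :=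
        hh_conv.2 (Set.mem_univ _) (Set.mem_univ _) hinv0 (by linarith) (by ring)
      rw [hzdef]
      linarith [hcf, hch]
    have hvx : x (k+1) - z
        = (beta (k+1))⁻¹ • (beta k • y (k+1) - (beta k - 1) • y k - xstar) := by
      rw [hxupd k hk, hzdef]
      match_scalars <;> field_simp <;> ring
    have hvy : y (k+2) - z
        = (beta (k+1))⁻¹ • (beta (k+1) • y (k+2) - (beta (k+1) - 1) • y (k+1) - xstar) := by
      rw [hzdef]
      match_scalars <;> field_simp
    have nx : ‖x (k+1) - z‖ ^ 2
        = ((beta (k+1))⁻¹) ^ 2 * ‖beta k • y (k+1) - (beta k - 1) • y k - xstar‖ ^ 2 := by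
      rw [hvx, norm_smul, Real.norm_eq_abs, mul_pow, sq_abs]
    have ny : ‖y (k+2) - z‖ ^ 2
        = ((beta (k+1))⁻¹) ^ 2
          * ‖beta (k+1) • y (k+2) - (beta (k+1) - 1) • y (k+1) - xstar‖ ^ 2 := by
      rw [hvy, norm_smul, Real.norm_eq_abs, mul_pow, sq_abs]
    rw [nx, ny] at hstar
    -- abstract to real scalars
    set A := ‖beta k • y (k+1) - (beta k - 1) • y k - xstar‖ ^ 2 with hA
    set B := ‖beta (k+1) • y (k+2) - (beta (k+1) - 1) • y (k+1) - xstar‖ ^ 2 with hB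
    set F2 := f (y (k+2)) + h (y (k+2)) with hF2
    set F1 := f (y (k+1)) + h (y (k+1)) with hF1
    set FS := f xstar + h xstar with hFS
    set bb := beta (k+1) with hbb
    set l1 := lam (k+1) with hl1
    have hlamp : 0 < l1 := hlam_pos (k+1) (by omega)
    have hlammo : l1 ≤ lam k := hlam_mono k hk
    have hsq : beta k ^ 2 = bb ^ 2 - bb := by
      have := hbsq k hk; linarith
    have hdk0 : 0 ≤ F1 - FS := by
      have := hmin (y (k+1)); rw [hF1, hFS]; linarith
    have h1 : F2 - FS ≤ (1 - bb⁻¹) * (F1 - FS)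
        + (1/(2*l1)) * (bb⁻¹ ^ 2 * A - bb⁻¹ ^ 2 * B) := by
      have e0 : bb⁻¹ * FS + (1 - bb⁻¹) * F1 = (1 - bb⁻¹) * (F1 - FS) + FS := by ring
      linarith [hstar, hFz, e0]
    have hm := mul_le_mul_of_nonneg_left h1
      (show (0:ℝ) ≤ l1 * bb ^ 2 by positivity)
    have e1 : l1 * bb ^ 2 * ((1 - bb⁻¹) * (F1 - FS)
          + (1/(2*l1)) * (bb⁻¹ ^ 2 * A - bb⁻¹ ^ 2 * B))
        = l1 * (bb ^ 2 - bb) * (F1 - FS) + A/2 - B/2 := by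
      field_simp
      ring
    rw [e1] at hm
    rw [hsq]
    have hfin : l1 * (bb ^ 2 - bb) * (F1 - FS) ≤ lam k * (bb ^ 2 - bb) * (F1 - FS) := by
      apply mul_le_mul_of_nonneg_right _ hdk0
      apply mul_le_mul_of_nonneg_right hlammo
      nlinarith [hbk1]
    clear_value A B F2 F1 FS bb l1
    linarith [hm, hfin]
  -- telescoping
  have tele : ∀ T : ℕ, 2 ≤ T →
      lam T * beta T ^ 2 * ((f (y (T+1)) + h (y (T+1))) - (f xstar + h xstar))
        + (1/2) * ‖beta T • y (T+1) - (beta T - 1) • y T - xstar‖ ^ 2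
      ≤ (1/2) * ‖y 1 - xstar‖ ^ 2 := by
    intro T hT
    induction T, hT using Nat.le_induction with
    | base =>
      have hs := step 1 le_rfl
      have hv1 : beta 1 • y 2 - (beta 1 - 1) • y 1 - xstar = y 1 - xstar := by
        rw [hb1]; module
      rw [hv1, hb1] at hs
      simpa using hs
    | succ n hn ih =>
      have hs := step n (by omega)
      linarith [hs, ih]
  -- conclusion
  intro T hT
  have hE := tele T hT
  have hbT : (T:ℝ)/2 ≤ beta T := hbge T hT
  have hT2 : (2:ℝ) ≤ (T:ℝ) := by exact_mod_cast hT
  have hbT1 : 1 ≤ beta T := by linarith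
  have hlamT0 := hlam_pos T (by omega)
  have hNpos : (0:ℝ) < 2 * lam T * beta T ^ 2 := by positivity
  have hvnn : (0:ℝ) ≤ ‖beta T • y (T+1) - (beta T - 1) • y T - xstar‖ ^ 2 := by positivity
  constructor
  · rw [le_div_iff₀ hNpos]
    nlinarith [hE, hvnn]
  · have hT1pos : (0:ℝ) < ((T:ℝ) - 1) ^ 2 := by nlinarith
    rw [div_le_div_iff₀ hNpos hT1pos]
    have hN0 : (0:ℝ) ≤ ‖y 1 - xstar‖ ^ 2 := by positivity
    have hlamT := hlam_lb T (by omega)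
    have h12 : (4:ℝ) ≤ 12 * L * lam T := by
      have hm := mul_le_mul_of_nonneg_left hlamT (show (0:ℝ) ≤ 12*L by positivity)
      have he : 12 * L * (1/(3*L)) = 4 := by field_simp; ring
      linarith [hm, he.symm.le]
    have hβsq : ((T:ℝ) - 1) ^ 2 ≤ 4 * beta T ^ 2 := by nlinarith [hbT, hT2]
    nlinarith [mul_le_mul_of_nonneg_left hβsq hN0,
      mul_le_mul_of_nonneg_left h12 (mul_nonneg hN0 (sq_nonneg (beta T)))]
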